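/- arXiv:1906.10076 — 2 statements merged into one kernel-verified Lean document; each statement's English description precedes it below -/
import Mathlib

section
/- For all σ > 0, 0 ≤ ρ ≤ 1, and real numbers ξ₁, ξ₂, we have e^{σ|ξ₁|} e^{σ|ξ₂|} − e^{σ|ξ₁+ξ₂|} ≤ (2σ min{|ξ₁|, |ξ₂|})^ρ e^{σ|ξ₁|} e^{σ|ξ₂|}. -/
/-!
Write `X = σ (|ξ₁| + |ξ₂|)` and `Y = σ |ξ₁ + ξ₂|`, so the left side is `e^X - e^Y = (1 - e^{-(X - Y)}) e^X`.
Since `1 - e^{-t} ≤ min 1 t` and the reverse triangle inequality gives `X - Y ≤ 2 σ min |ξ₁| |ξ₂|`,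
it remains to note that `min 1 x ≤ x ^ ρ` for `x ≥ 0` and `0 ≤ ρ ≤ 1`.
-/

open Real

lemma abs_add_abs_le_abs_add_add_two_mul_min (a b : ℝ) :
    |a| + |b| ≤ |a + b| + 2 * min |a| |b| := by
  rcases min_cases |a| |b| with ⟨hmin, -⟩ | ⟨hmin, -⟩ <;> rw [hmin]
  · have := abs_sub (a + b) a
    rw [add_sub_cancel_left] at this
    linarith
  · have := abs_sub (a + b) b
    rw [add_sub_cancel_right] at this
    linarith

lemma one_sub_exp_neg_le_min (t : ℝ) : 1 - exp (-t) ≤ min 1 t :=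
  le_min (by linarith [exp_pos (-t)]) (by linarith [add_one_le_exp (-t)])

lemma exp_sub_exp_le_min_one_mul (x y : ℝ) : exp x - exp y ≤ min 1 (x - y) * exp x := by
  have hfactor : exp x - exp y = (1 - exp (-(x - y))) * exp x := by
    rw [sub_mul, one_mul, ← exp_add]; ring_nf
  rw [hfactor]
  exact mul_le_mul_of_nonneg_right (one_sub_exp_neg_le_min _) (exp_pos x).le

lemma min_one_le_rpow {x ρ : ℝ} (hx : 0 ≤ x) (hρ0 : 0 ≤ ρ) (hρ1 : ρ ≤ 1) :
    min 1 x ≤ x ^ ρ := by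
  rcases le_total x 1 with hx1 | hx1
  · calc min 1 x ≤ x := min_le_right _ _
      _ = x ^ (1 : ℝ) := (rpow_one x).symm
      _ ≤ x ^ ρ := rpow_le_rpow_of_exponent_ge' hx hx1 hρ0 hρ1
  · exact (min_le_left _ _).trans (one_le_rpow hx1 hρ0)

theorem stmt_0 (σ ρ ξ₁ ξ₂ : ℝ) (hσ : 0 < σ) (hρ0 : 0 ≤ ρ) (hρ1 : ρ ≤ 1) :
    Real.exp (σ * |ξ₁|) * Real.exp (σ * |ξ₂|) - Real.exp (σ * |ξ₁ + ξ₂|) ≤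
      (2 * σ * min |ξ₁| |ξ₂|) ^ ρ * (Real.exp (σ * |ξ₁|) * Real.exp (σ * |ξ₂|)) := by
  set m := min |ξ₁| |ξ₂|
  have hgap : σ * (|ξ₁| + |ξ₂|) - σ * |ξ₁ + ξ₂| ≤ 2 * σ * m := by
    nlinarith [abs_add_abs_le_abs_add_add_two_mul_min ξ₁ ξ₂]
  have hprod : exp (σ * |ξ₁|) * exp (σ * |ξ₂|) = exp (σ * (|ξ₁| + |ξ₂|)) := by
    rw [← exp_add, mul_add]
  rw [hprod]
  calc exp (σ * (|ξ₁| + |ξ₂|)) - exp (σ * |ξ₁ + ξ₂|)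
      ≤ min 1 (σ * (|ξ₁| + |ξ₂|) - σ * |ξ₁ + ξ₂|) * exp (σ * (|ξ₁| + |ξ₂|)) :=
        exp_sub_exp_le_min_one_mul _ _
    _ ≤ min 1 (2 * σ * m) * exp (σ * (|ξ₁| + |ξ₂|)) := by gcongr
    _ ≤ (2 * σ * m) ^ ρ * exp (σ * (|ξ₁| + |ξ₂|)) := by
        gcongr
        exact min_one_le_rpow (by positivity) hρ0 hρ1
end

section
/- Let p(ξ) = α ξ³ − β ξ⁵ with β ≠ 0. If ξ₁ + ξ₂ + ξ₃ = 0 and N_max = max{|ξ₁|,|ξ₂|,|ξ₃|} is sufficiently large (depending only on α, β), then |p(ξ₁) + p(ξ₂) + p(ξ₃)| ≥ c N_max⁴ N_min for some constant c > 0 depending only on α and β, where N_min = min{|ξ₁|,|ξ₂|,|ξ₃|}. -/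
/-!
On the plane `ξ₁ + ξ₂ + ξ₃ = 0` the resonance function `h = p(ξ₁) + p(ξ₂) + p(ξ₃)` factors
as `2 h = ξ₁ ξ₂ ξ₃ (6α - 5β (ξ₁² + ξ₂² + ξ₃²))`. The product satisfies
`|ξ₁ ξ₂ ξ₃| ≥ N_min N_max² / 2`, since the largest of the three is at most the sum of the
other two, and once `N_max²` dominates `|α| / |β|` the second
factor is at least `5|β| N_max² / 2` in absolute value.
-/

theorem two_mul_kawahara_resonance_eq {R : Type*} [CommRing R] (α β a b c : R)
    (h : a + b + c = 0) :
    2 * ((α * a ^ 3 - β * a ^ 5) + (α * b ^ 3 - β * b ^ 5) + (α * c ^ 3 - β * c ^ 5)) =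
      a * b * c * (6 * α - 5 * β * (a ^ 2 + b ^ 2 + c ^ 2)) := by
  obtain rfl : c = -a - b := by linear_combination h
  ring

section LinearOrderedRing

variable {R : Type*} [CommRing R] [LinearOrder R] [IsStrictOrderedRing R]

theorem max_abs_sq_le_sum_sq (a b c : R) :
    max (max |a| |b|) |c| ^ 2 ≤ a ^ 2 + b ^ 2 + c ^ 2 := by
  have := sq_nonneg a; have := sq_nonneg b; have := sq_nonneg c
  rcases max_choice (max |a| |b|) |c| with h | h <;> rw [h]
  · rcases max_choice |a| |b| with h' | h' <;> rw [h', sq_abs] <;> linarith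
  · rw [sq_abs]; linarith

theorem mul_sq_le_two_mul_of_le_add {m x y z : R} (hm : 0 ≤ m) (hx : 0 ≤ x)
    (hmy : m ≤ y) (hmz : m ≤ z) (hxyz : x ≤ y + z) : m * x ^ 2 ≤ 2 * (x * y * z) := by
  have hy : 0 ≤ y := hm.trans hmy
  have hz : 0 ≤ z := hm.trans hmz
  calc m * x ^ 2 ≤ m * x * (y + z) := by
        rw [sq, ← mul_assoc]; exact mul_le_mul_of_nonneg_left hxyz (by positivity)
    _ = x * (m * y + m * z) := by ring
    _ ≤ x * (z * y + y * z) := by gcongr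
    _ = 2 * (x * y * z) := by ring

theorem abs_le_abs_add_abs_of_add_eq_zero {a b c : R} (h : a + b + c = 0) :
    |a| ≤ |b| + |c| := by
  rw [show a = -(b + c) by linear_combination h, abs_neg]
  exact abs_add_le b c

theorem min_abs_mul_max_abs_sq_le_of_add_eq_zero {a b c : R} (h : a + b + c = 0) :
    min (min |a| |b|) |c| * max (max |a| |b|) |c| ^ 2 ≤ 2 * |a * b * c| := by
  set m := min (min |a| |b|) |c|
  have hm : 0 ≤ m := by positivity
  have hma : m ≤ |a| := (min_le_left _ _).trans (min_le_left _ _)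
  have hmb : m ≤ |b| := (min_le_left _ _).trans (min_le_right _ _)
  have hmc : m ≤ |c| := min_le_right _ _
  rw [abs_mul, abs_mul]
  rcases max_choice (max |a| |b|) |c| with hM | hM <;> rw [hM]
  · rcases max_choice |a| |b| with hM' | hM' <;> rw [hM']
    · exact mul_sq_le_two_mul_of_le_add hm (abs_nonneg a) hmb hmc
        (abs_le_abs_add_abs_of_add_eq_zero h)
    · have := mul_sq_le_two_mul_of_le_add hm (abs_nonneg b) hma hmc
        (abs_le_abs_add_abs_of_add_eq_zero (a := b) (b := a) (c := c) (by linear_combination h))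
      linarith
  · have := mul_sq_le_two_mul_of_le_add hm (abs_nonneg c) hma hmb
      (abs_le_abs_add_abs_of_add_eq_zero (a := c) (b := a) (c := b) (by linear_combination h))
    linarith

theorem five_mul_abs_mul_le_two_mul_abs_six_mul_sub {α β S : R} (hS : 0 ≤ S)
    (h : 12 * |α| ≤ 5 * |β| * S) :
    5 * |β| * S ≤ 2 * |6 * α - 5 * β * S| := by
  have : |5 * β * S| - |6 * α| ≤ |6 * α - 5 * β * S| := by
    rw [abs_sub_comm]; exact abs_sub_abs_le_abs_sub _ _
  rw [abs_mul, abs_mul, abs_of_nonneg hS, abs_mul, Nat.abs_ofNat, Nat.abs_ofNat] at this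
  linarith

end LinearOrderedRing

theorem stmt_6 (α β : ℝ) (hβ : β ≠ 0) :
    ∃ c > 0, ∃ N₀ > 0, ∀ ξ₁ ξ₂ ξ₃ : ℝ, ξ₁ + ξ₂ + ξ₃ = 0 →
      N₀ ≤ max (max |ξ₁| |ξ₂|) |ξ₃| →
      c * (max (max |ξ₁| |ξ₂|) |ξ₃|) ^ 4 * min (min |ξ₁| |ξ₂|) |ξ₃| ≤
        |(α * ξ₁ ^ 3 - β * ξ₁ ^ 5) + (α * ξ₂ ^ 3 - β * ξ₂ ^ 5) +
          (α * ξ₃ ^ 3 - β * ξ₃ ^ 5)| := by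
  have hβ₀ : 0 < |β| := abs_pos.mpr hβ
  refine ⟨5 * |β| / 8, by positivity, 1 + 12 * |α| / (5 * |β|), by positivity, ?_⟩
  intro ξ₁ ξ₂ ξ₃ hsum hN
  set M := max (max |ξ₁| |ξ₂|) |ξ₃|
  set S := ξ₁ ^ 2 + ξ₂ ^ 2 + ξ₃ ^ 2
  have hM_sq : 12 * |α| ≤ 5 * |β| * M ^ 2 := by
    have hM₁ : 12 * |α| / (5 * |β|) ≤ M ^ 2 := by
      nlinarith [div_nonneg (abs_nonneg α) hβ₀.le]
    rw [div_le_iff₀ (by positivity)] at hM₁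
    linarith
  have hMS : M ^ 2 ≤ S := max_abs_sq_le_sum_sq ξ₁ ξ₂ ξ₃
  have hfactor := five_mul_abs_mul_le_two_mul_abs_six_mul_sub (α := α)
    (sq_nonneg M |>.trans hMS) (hM_sq.trans (by gcongr))
  have hprod := min_abs_mul_max_abs_sq_le_of_add_eq_zero hsum
  calc 5 * |β| / 8 * M ^ 4 * min (min |ξ₁| |ξ₂|) |ξ₃|
      = (min (min |ξ₁| |ξ₂|) |ξ₃| * M ^ 2) * (5 * |β| * M ^ 2) / 8 := by ring
    _ ≤ (2 * |ξ₁ * ξ₂ * ξ₃|) * (5 * |β| * S) / 8 := by gcongr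
    _ ≤ (2 * |ξ₁ * ξ₂ * ξ₃|) * (2 * |6 * α - 5 * β * S|) / 8 := by gcongr
    _ = |2 * ((α * ξ₁ ^ 3 - β * ξ₁ ^ 5) + (α * ξ₂ ^ 3 - β * ξ₂ ^ 5) +
          (α * ξ₃ ^ 3 - β * ξ₃ ^ 5))| / 2 := by
      rw [two_mul_kawahara_resonance_eq α β ξ₁ ξ₂ ξ₃ hsum, abs_mul (ξ₁ * ξ₂ * ξ₃)]
      ring
    _ = _ := by rw [abs_mul, abs_two]; ring
end
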